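/- The least fixed point of the characteristic function with respect to the constant-one post-expectation computes the loop's termination probability: for every σ : Σ, (lfp Φ_1) σ = ∑' τ, W σ τ, where Φ_1 is the characteristic function with respect to the constant post-expectation 1. -/

import Mathlib

/-!
By Kleene's fixed-point theorem: `Φ_1` is ω-continuous (monotone convergence for sums in `ℝ≥0∞`),
so `lfp Φ_1 = ⨆ n, Φ_1^[n] ⊥`. By induction, `Φ_1^[n + 1] ⊥ σ = ∑' τ, μ_n σ τ` is the probability
of terminating within `n` iterations, and since `μ_n` increases in `n`, monotone convergence
exchanges the supremum over `n` with the sum over `τ`.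
-/

open ENNReal

/-- The characteristic function of the loop `while G do body` with respect to
post-expectation `E`. -/
noncomputable def Phi {S : Type*} (G : S → Prop) [DecidablePred G] (body : S → PMF S)
    (E : S → ℝ≥0∞) (X : S → ℝ≥0∞) : S → ℝ≥0∞ :=
  fun σ => if G σ then ∑' τ, body σ τ * X τ else E σ

theorem Phi_monotone {S : Type*} (G : S → Prop) [DecidablePred G] (body : S → PMF S)
    (E : S → ℝ≥0∞) : Monotone (Phi G body E) := by
  intro X Y hXY σ
  simp only [Phi]
  split
  · exact ENNReal.tsum_le_tsum fun τ => by gcongr <;> exact hXY τ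
  · exact le_rfl

/-- The characteristic function, bundled as a monotone map on the complete
lattice of expectations. -/
noncomputable def PhiHom {S : Type*} (G : S → Prop) [DecidablePred G] (body : S → PMF S)
    (E : S → ℝ≥0∞) : (S → ℝ≥0∞) →o (S → ℝ≥0∞) :=
  ⟨Phi G body E, Phi_monotone G body E⟩

/-- The stopped `n`-step kernels of the loop `while G do body`. -/
noncomputable def mu {S : Type*} (G : S → Prop) [DecidablePred G] [DecidableEq S]
    (body : S → PMF S) : ℕ → S → S → ℝ≥0∞
  | 0 => fun σ τ => if ¬ G σ ∧ τ = σ then 1 else 0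
  | n + 1 => fun σ =>
      if G σ then (fun τ => ∑' σ', body σ σ' * mu G body n σ' τ) else mu G body 0 σ

/-- The loop's output sub-distribution. -/
noncomputable def W {S : Type*} (G : S → Prop) [DecidablePred G] [DecidableEq S]
    (body : S → PMF S) (σ τ : S) : ℝ≥0∞ :=
  ⨆ n, mu G body n σ τ

theorem ENNReal.tsum_iSup_of_monotone {α ι : Type*} [Preorder ι] [IsDirectedOrder ι]
    {f : ι → α → ℝ≥0∞} (hf : Monotone f) : ∑' a, ⨆ i, f i a = ⨆ i, ∑' a, f i a := by
  simp_rw [ENNReal.tsum_eq_iSup_sum]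
  rw [iSup_comm]
  congr 1 with s
  exact ENNReal.finsetSum_iSup_of_monotone fun a _ _ hij => hf hij a

section

variable {S : Type*} (G : S → Prop) [DecidablePred G] (body : S → PMF S)

theorem Phi_iSup_of_monotone (E : S → ℝ≥0∞) {X : ℕ → S → ℝ≥0∞} (hX : Monotone X) :
    Phi G body E (⨆ n, X n) = ⨆ n, Phi G body E (X n) := by
  ext σ
  by_cases hG : G σ
  · have hbody : Monotone fun n τ => body σ τ * X n τ := fun _ _ hmn τ =>
      mul_le_mul_right (hX hmn τ) _
    simp only [Phi, hG, if_true, iSup_apply, ENNReal.mul_iSup]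
    exact ENNReal.tsum_iSup_of_monotone hbody
  · simp [Phi, hG, iSup_apply]

open OmegaCompletePartialOrder in
theorem ωScottContinuous_PhiHom (E : S → ℝ≥0∞) : ωScottContinuous (PhiHom G body E) :=
  ωScottContinuous.of_map_ωSup_of_orderHom fun c => by
    -- `ωSup` on `S → ℝ≥0∞` is not definitionally the pointwise `⨆`.
    rw [← ωSup_eq_of_isLUB (isLUB_iSup (f := c)), ← ωSup_eq_of_isLUB isLUB_iSup]
    exact Phi_iSup_of_monotone G body E c.monotone

variable [DecidableEq S]

theorem mu_succ_apply (n : ℕ) (σ τ : S) :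
    mu G body (n + 1) σ τ =
      if G σ then ∑' σ', body σ σ' * mu G body n σ' τ else mu G body 0 σ τ := by
  by_cases hG : G σ <;> simp [mu, hG]

theorem mu_monotone : Monotone (mu G body) := by
  refine monotone_nat_of_le_succ fun n => ?_
  induction n with
  | zero =>
    intro σ τ
    by_cases hG : G σ <;> simp [mu, hG]
  | succ n ih =>
    intro σ τ
    rw [mu_succ_apply G body (n + 1), mu_succ_apply]
    split_ifs
    · exact ENNReal.tsum_le_tsum fun σ' => by gcongr; exact ih σ' τ
    · exact le_rfl

theorem tsum_mu_zero (σ : S) : ∑' τ, mu G body 0 σ τ = if G σ then 0 else 1 := by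
  by_cases hG : G σ <;> simp [mu, hG]

theorem Phi_one_bot : Phi G body (fun _ => 1) ⊥ = fun σ => ∑' τ, mu G body 0 σ τ := by
  ext σ
  by_cases hG : G σ <;> simp [Phi, tsum_mu_zero, hG]

theorem Phi_one_tsum_mu (n : ℕ) :
    Phi G body (fun _ => 1) (fun σ => ∑' τ, mu G body n σ τ) =
      fun σ => ∑' τ, mu G body (n + 1) σ τ := by
  ext σ
  by_cases hG : G σ
  · simp only [Phi, hG, if_true, mu_succ_apply, ← ENNReal.tsum_mul_left]
    exact ENNReal.tsum_comm
  · simp [Phi, hG, mu_succ_apply, tsum_mu_zero]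

theorem iterate_Phi_one_bot (n : ℕ) :
    (Phi G body fun _ => 1)^[n + 1] ⊥ = fun σ => ∑' τ, mu G body n σ τ := by
  induction n with
  | zero => exact Phi_one_bot G body
  | succ n ih => rw [Function.iterate_succ_apply', ih, Phi_one_tsum_mu]

theorem tsum_W_eq_iSup_tsum_mu (σ : S) : ∑' τ, W G body σ τ = ⨆ n, ∑' τ, mu G body n σ τ :=
  ENNReal.tsum_iSup_of_monotone fun _ _ hmn => mu_monotone G body hmn σ

end

theorem lfp_one_eq_termination_prob_general {S : Type*} [DecidableEq S]
    (G : S → Prop) [DecidablePred G] (body : S → PMF S) (σ : S) :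
    OrderHom.lfp (PhiHom G body (fun _ => 1)) σ = ∑' τ, W G body σ τ := by
  rw [fixedPoints.lfp_eq_sSup_iterate _ (ωScottContinuous_PhiHom G body _), iSup_apply,
    ← sup_iSup_nat_succ, Function.iterate_zero_apply, Pi.bot_apply, bot_sup_eq,
    tsum_W_eq_iSup_tsum_mu]
  exact iSup_congr fun n => congrFun (iterate_Phi_one_bot G body n) σ

/-- the least fixed point with respect to the constant-one
post-expectation computes the loop's termination probability. -/
theorem lfp_one_eq_termination_prob {S : Type*} [Countable S] [DecidableEq S]
    (G : S → Prop) [DecidablePred G] (body : S → PMF S) (σ : S) :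
    OrderHom.lfp (PhiHom G body (fun _ => 1)) σ = ∑' τ, W G body σ τ :=
  lfp_one_eq_termination_prob_general G body σ
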